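/- Let f : ℝ^d → ℝ be convex, bounded below, w convex differentiable and L_w-smooth with respect to a norm ‖·‖, and let θ_{s+1} = argmin_θ [f(θ) + (1/(2η)) D_w(θ, θ_s)] for s = 0,…,t−1, initialized at θ₀ = 0. Then for every θ: f(θ_t) − f(θ) ≤ (L_w / (4 η t)) ‖θ‖². -/

import Mathlib

/-!
Each proximal step `θ⁺` satisfies the first-order condition of its defining minimisation, which the
three-point identity of Bregman divergences turns into
`f θ⁺ - f u ≤ c (D(u, θ) - D(u, θ⁺) - D(θ⁺, θ))` with `c = 1/(2η)`. Taking `u = θ` shows the losses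
decrease, and taking `u = v` and summing telescopes to `t (f θ_t - f v) ≤ c D(v, θ₀)`, which
smoothness of `w` bounds by `c (L_w / 2) ‖v‖²` since `θ₀ = 0`.
-/

open scoped RealInnerProductSpace
open Filter Topology Set AffineMap

variable {E : Type*} [NormedAddCommGroup E] [InnerProductSpace ℝ E]

theorem HasGradientAt.hasDerivAt_comp_lineMap [CompleteSpace E] {w : E → ℝ} {g y : E}
    (hg : HasGradientAt w g y) (x : E) :
    HasDerivAt (fun l : ℝ => w (lineMap y x l)) ⟪g, x - y⟫ 0 := by
  have hw : HasFDerivAt w (InnerProductSpace.toDual ℝ E g) (lineMap y x (0 : ℝ)) := by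
    simpa using hg.hasFDerivAt
  have h := hw.comp_hasDerivAt (0 : ℝ) hasDerivAt_lineMap
  simp only [InnerProductSpace.toDual_apply_apply] at h
  exact h

def bregmanDiv (w : E → ℝ) (gw : E → E) (x y : E) : ℝ :=
  w x - w y - ⟪gw y, x - y⟫

namespace bregmanDiv

variable {w : E → ℝ} {gw : E → E}

@[simp]
theorem self (x : E) : bregmanDiv w gw x x = 0 := by
  simp [bregmanDiv]

theorem three_point (x p y : E) :
    bregmanDiv w gw x y = bregmanDiv w gw x p + bregmanDiv w gw p y + ⟪gw p - gw y, x - p⟫ := by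
  have hxy : x - y = (x - p) + (p - y) := by abel
  simp only [bregmanDiv, hxy, inner_add_right, inner_sub_left]
  ring

variable [CompleteSpace E]

theorem nonneg (hw : ConvexOn ℝ univ w) {y : E} (hg : HasGradientAt w (gw y) y) (x : E) :
    0 ≤ bregmanDiv w gw x y := by
  have hline : ConvexOn ℝ univ (fun l : ℝ => w (lineMap y x l)) :=
    hw.comp_affineMap (lineMap y x)
  have := hline.le_slope_of_hasDerivAt (mem_univ 0) (mem_univ 1) zero_lt_one
    (hg.hasDerivAt_comp_lineMap x)
  simp only [slope_def_field, lineMap_apply_zero, lineMap_apply_one, sub_zero, div_one] at this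
  simp only [bregmanDiv]
  linarith

theorem tendsto_lineMap_div {y : E} (hg : HasGradientAt w (gw y) y) (x : E) :
    Tendsto (fun l : ℝ => bregmanDiv w gw (lineMap y x l) y / l) (𝓝[≠] 0) (𝓝 0) := by
  have hslope := hasDerivAt_iff_tendsto_slope.mp (hg.hasDerivAt_comp_lineMap x)
  have hlim := hslope.sub_const ⟪gw y, x - y⟫
  rw [sub_self] at hlim
  refine hlim.congr' (eventually_nhdsWithin_of_forall fun l (hl : l ≠ 0) => ?_)
  have hsub : lineMap y x l - y = l • (x - y) := lineMap_vsub_left y x l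
  simp only [slope_def_field, bregmanDiv, hsub, inner_smul_right, lineMap_apply_zero, sub_zero]
  field_simp

theorem prox_step_sub_le {f : E → ℝ} {c : ℝ} {p y : E} (hf : ConvexOn ℝ univ f)
    (hg : HasGradientAt w (gw p) p)
    (hmin : ∀ x, f p + c * bregmanDiv w gw p y ≤ f x + c * bregmanDiv w gw x y) (u : E) :
    f p - f u ≤ c * (bregmanDiv w gw u y - bregmanDiv w gw u p - bregmanDiv w gw p y) := by
  rw [three_point u p y]
  suffices f p - f u ≤ c * ⟪gw p - gw y, u - p⟫ by linarith
  have hlim := ((tendsto_lineMap_div hg u).const_mul c).add_const (c * ⟪gw p - gw y, u - p⟫)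
  rw [mul_zero, zero_add] at hlim
  refine ge_of_tendsto (hlim.mono_left (nhdsWithin_mono _ fun l (hl : l ∈ Ioi 0) => hl.ne')) ?_
  -- Compare `p` with `lineMap p u l`; after dividing by `l`, the term `D(lineMap p u l, p) / l`
  -- vanishes as `l → 0⁺`.
  filter_upwards [Ioc_mem_nhdsGT zero_lt_one] with l ⟨hl0, hl1⟩
  set x := lineMap p u l
  have hconv : f x ≤ (1 - l) * f p + l * f u := by
    simpa only [x, lineMap_apply_module, smul_eq_mul] using
      hf.2 (mem_univ p) (mem_univ u) (by linarith) hl0.le (by ring)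
  have hsub : x - p = l • (u - p) := lineMap_vsub_left p u l
  have hthree := three_point (w := w) (gw := gw) x p y
  rw [hsub, inner_smul_right] at hthree
  have hmin_x := hmin x
  rw [hthree] at hmin_x
  rw [mul_div_assoc', ← sub_le_iff_le_add, le_div_iff₀ hl0]
  linarith

end bregmanDiv

theorem Antitone.natCast_mul_sub_le_of_sub_le {a φ : ℕ → ℝ} {b : ℝ} (ha : Antitone a)
    (hφ : ∀ s, 0 ≤ φ s) (hstep : ∀ s, a (s + 1) - b ≤ φ s - φ (s + 1)) (t : ℕ) :
    t * (a t - b) ≤ φ 0 :=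
  calc (t : ℝ) * (a t - b) = ∑ _s ∈ Finset.range t, (a t - b) := by simp [mul_sub]
    _ ≤ ∑ s ∈ Finset.range t, (φ s - φ (s + 1)) := Finset.sum_le_sum fun s hs =>
          (sub_le_sub_right (ha (Finset.mem_range.mp hs)) b).trans (hstep s)
    _ = φ 0 - φ t := Finset.sum_range_sub' φ t
    _ ≤ φ 0 := sub_le_self _ (hφ t)

theorem bppa_loss_bound_general {d : ℕ}
    (f w : EuclideanSpace ℝ (Fin d) → ℝ)
    (gw : EuclideanSpace ℝ (Fin d) → EuclideanSpace ℝ (Fin d))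
    (nrm : EuclideanSpace ℝ (Fin d) → ℝ)
    (Lw η : ℝ) (hη : 0 < η)
    (hf : ConvexOn ℝ Set.univ f)
    (hw : ConvexOn ℝ Set.univ w)
    (hw_diff : ∀ x, HasGradientAt w (gw x) x)
    (D : EuclideanSpace ℝ (Fin d) → EuclideanSpace ℝ (Fin d) → ℝ)
    (hD : ∀ x y, D x y = w x - w y - ⟪gw y, x - y⟫)
    (hsmooth : ∀ x y, D x y ≤ Lw/2 * (nrm (x - y))^2)
    (θ : ℕ → EuclideanSpace ℝ (Fin d))
    (hθ0 : θ 0 = 0)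
    (hiter : ∀ s θ', f (θ (s+1)) + 1/(2*η) * D (θ (s+1)) (θ s)
        ≤ f θ' + 1/(2*η) * D θ' (θ s))
    (t : ℕ) (ht : 0 < t) :
    ∀ v, f (θ t) - f v ≤ Lw/(4*η*t) * (nrm v)^2 := by
  intro v
  obtain rfl : D = bregmanDiv w gw := funext₂ hD
  have hc : 0 ≤ 1 / (2 * η) := by positivity
  have hB_nonneg x y : 0 ≤ bregmanDiv w gw x y := bregmanDiv.nonneg hw (hw_diff y) x
  have hloss_anti : Antitone fun s => f (θ s) := antitone_nat_of_succ_le fun s => by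
    have := hiter s (θ s)
    rw [bregmanDiv.self, mul_zero, add_zero] at this
    linarith [mul_nonneg hc (hB_nonneg (θ (s + 1)) (θ s))]
  have hstep s : f (θ (s + 1)) - f v ≤
      1 / (2 * η) * bregmanDiv w gw v (θ s) - 1 / (2 * η) * bregmanDiv w gw v (θ (s + 1)) := by
    have := bregmanDiv.prox_step_sub_le hf (hw_diff _) (hiter s) v
    linarith [mul_nonneg hc (hB_nonneg (θ (s + 1)) (θ s))]
  have htelescope := hloss_anti.natCast_mul_sub_le_of_sub_le
    (fun s => mul_nonneg hc (hB_nonneg v (θ s))) hstep t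
  have hB_init : bregmanDiv w gw v (θ 0) ≤ Lw / 2 * nrm v ^ 2 := by
    simpa [hθ0] using hsmooth v 0
  rw [show Lw / (4 * η * t) * nrm v ^ 2 = 1 / (2 * η) * (Lw / 2 * nrm v ^ 2) / t by
    field_simp; ring, le_div_iff₀ (by positivity), mul_comm]
  exact htelescope.trans (mul_le_mul_of_nonneg_left hB_init hc)

/-- Convergence rate of the Bregman proximal point algorithm with constant stepsize:
`f(θ_t) − f(θ) ≤ (L_w / (4 η t)) ‖θ‖²` for all `θ`. -/
theorem bppa_loss_bound {d : ℕ}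
    (f w : EuclideanSpace ℝ (Fin d) → ℝ)
    (gw : EuclideanSpace ℝ (Fin d) → EuclideanSpace ℝ (Fin d))
    (nrm : EuclideanSpace ℝ (Fin d) → ℝ)
    (Lw η : ℝ) (hLw : 0 < Lw) (hη : 0 < η)
    (hf : ConvexOn ℝ Set.univ f)
    (hbdd : BddBelow (Set.range f))
    (hw : ConvexOn ℝ Set.univ w)
    (hw_diff : ∀ x, HasGradientAt w (gw x) x)
    (D : EuclideanSpace ℝ (Fin d) → EuclideanSpace ℝ (Fin d) → ℝ)
    (hD : ∀ x y, D x y = w x - w y - ⟪gw y, x - y⟫)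
    (hsmooth : ∀ x y, D x y ≤ Lw/2 * (nrm (x - y))^2)
    (θ : ℕ → EuclideanSpace ℝ (Fin d))
    (hθ0 : θ 0 = 0)
    (hiter : ∀ s θ', f (θ (s+1)) + 1/(2*η) * D (θ (s+1)) (θ s)
        ≤ f θ' + 1/(2*η) * D θ' (θ s))
    (t : ℕ) (ht : 0 < t) :
    ∀ v, f (θ t) - f v ≤ Lw/(4*η*t) * (nrm v)^2 :=
  bppa_loss_bound_general f w gw nrm Lw η hη hf hw hw_diff D hD hsmooth θ hθ0 hiter t ht
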